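/- arXiv:math/9607213 — 3 statements merged into one kernel-verified Lean document; each statement's English description precedes it below -/
import Mathlib

section
/- Let g ∈ Mat_{n×n}(ℂ) be invertible with gᵀ = g and conj(g) = g (i.e. g is real symmetric, viewed as a complex matrix), and let b ∈ Mat_{n×n}(ℂ) be such that g·b is symmetric ((g·b)ᵀ = g·b). Then the 2n×2n block matrix G = [[g + ½·bᵀ·g·conj(b), bᵀ], [conj(b), 2·g⁻¹]] is invertible with inverse G⁻¹ = [[g⁻¹, −½·b], [−½·conj(b)ᵀ, ½·(g + ½·conj(b)ᵀ·g·b)]]; that is, the product of these two block matrices in either order is the 2n×2n identity matrix. -/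
/-!
Write `c = conj b`. Since `g` is real symmetric, the symmetry of `g b` says `bᵀ g = g b`, and
conjugating it gives `cᵀ g = g c`. These two intertwining relations are all that the block
multiplication needs, over any commutative ring and for any scalars `s t` with `s t = 1`
(here `s = ½`, `t = 2`). Only one product has to be checked: a one-sided inverse of a square
matrix over a commutative ring is two-sided.
-/

open Matrix

namespace Matrix

variable {n R : Type*} [Fintype n] [DecidableEq n] [CommRing R]

theorem inv_mul_eq_mul_inv_of_mul_eq_mul {g a b : Matrix n n R} (hg : IsUnit g)
    (h : a * g = g * b) : g⁻¹ * a = b * g⁻¹ := by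
  have hdet : IsUnit g.det := (isUnit_iff_isUnit_det g).mp hg
  calc g⁻¹ * a = g⁻¹ * (a * g) * g⁻¹ := by
        rw [mul_assoc, mul_assoc, mul_nonsing_inv g hdet, mul_one]
    _ = b * g⁻¹ := by rw [h, ← mul_assoc, nonsing_inv_mul g hdet, one_mul]

theorem mul_mul_inv_eq_of_mul_eq_mul {g a b : Matrix n n R} (hg : IsUnit g)
    (h : a * g = g * b) : g * (b * g⁻¹) = a := by
  rw [← mul_assoc, ← h, mul_assoc, mul_nonsing_inv g ((isUnit_iff_isUnit_det g).mp hg), mul_one]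

theorem fromBlocks_mul_fromBlocks_eq_one {g b c : Matrix n n R} {s t : R} (hst : s * t = 1)
    (hg : IsUnit g) (hb : bᵀ * g = g * b) (hc : cᵀ * g = g * c) :
    fromBlocks (g + s • (bᵀ * g * c)) bᵀ c (t • g⁻¹)
      * fromBlocks g⁻¹ (-(s • b)) (-(s • cᵀ)) (s • (g + s • (cᵀ * g * b))) = 1 := by
  have hdet : IsUnit g.det := (isUnit_iff_isUnit_det g).mp hg
  have hb' (X : Matrix n n R) : bᵀ * (g * X) = g * (b * X) := by rw [← mul_assoc, hb, mul_assoc]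
  have hc' (X : Matrix n n R) : cᵀ * (g * X) = g * (c * X) := by rw [← mul_assoc, hc, mul_assoc]
  rw [fromBlocks_multiply, ← fromBlocks_one]
  congr 1
  · simp only [add_mul, mul_neg, smul_mul_assoc, mul_smul_comm, mul_assoc, mul_nonsing_inv g hdet,
      mul_mul_inv_eq_of_mul_eq_mul hg hc]
    abel
  · simp only [mul_add, add_mul, mul_neg, smul_mul_assoc, mul_smul_comm, smul_add, mul_assoc,
      hb, hb', hc']
    abel
  · simp only [mul_neg, smul_mul_assoc, mul_smul_comm, inv_mul_eq_mul_inv_of_mul_eq_mul hg hc,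
      smul_smul, hst, one_smul, add_neg_cancel]
  · simp only [mul_add, mul_neg, smul_mul_assoc, mul_smul_comm, smul_add, mul_assoc, hc',
      ← mul_assoc g⁻¹ g, nonsing_inv_mul g hdet, one_mul, smul_smul, hst, mul_one, one_smul]
    abel

end Matrix

/-- If `g ∈ Mat_{n×n}(ℂ)` is invertible, real symmetric (`gᵀ = g`,
`conj(g) = g`), and `b` is such that `g·b` is symmetric, then the block matrix
`G = [[g + ½bᵀg·conj(b), bᵀ], [conj(b), 2g⁻¹]]` is invertible with inverse
`[[g⁻¹, −½b], [−½conj(b)ᵀ, ½(g + ½conj(b)ᵀg·b)]]`: the product in either order is the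
identity. -/
theorem stmt_12 (n : ℕ) (g b : Matrix (Fin n) (Fin n) ℂ)
    (hgsym : gᵀ = g) (hgreal : g.map (starRingEnd ℂ) = g) (hgu : IsUnit g)
    (hgb : (g * b)ᵀ = g * b) :
    Matrix.fromBlocks (g + (1 / 2 : ℂ) • (bᵀ * g * b.map (starRingEnd ℂ))) bᵀ
        (b.map (starRingEnd ℂ)) ((2 : ℂ) • g⁻¹)
      * Matrix.fromBlocks g⁻¹ (-((1 / 2 : ℂ) • b)) (-((1 / 2 : ℂ) • (b.map (starRingEnd ℂ))ᵀ))
        ((1 / 2 : ℂ) • (g + (1 / 2 : ℂ) • ((b.map (starRingEnd ℂ))ᵀ * g * b))) = 1 ∧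
    Matrix.fromBlocks g⁻¹ (-((1 / 2 : ℂ) • b)) (-((1 / 2 : ℂ) • (b.map (starRingEnd ℂ))ᵀ))
        ((1 / 2 : ℂ) • (g + (1 / 2 : ℂ) • ((b.map (starRingEnd ℂ))ᵀ * g * b)))
      * Matrix.fromBlocks (g + (1 / 2 : ℂ) • (bᵀ * g * b.map (starRingEnd ℂ))) bᵀ
        (b.map (starRingEnd ℂ)) ((2 : ℂ) • g⁻¹) = 1 := by
  have hb : bᵀ * g = g * b := by rw [← hgb, transpose_mul, hgsym]
  have hc : (b.map (starRingEnd ℂ))ᵀ * g = g * b.map (starRingEnd ℂ) := by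
    simpa only [transpose_map, Matrix.map_mul, hgreal] using congrArg (·.map (starRingEnd ℂ)) hb
  have h := fromBlocks_mul_fromBlocks_eq_one (s := (1 / 2 : ℂ)) (t := 2) (by norm_num) hgu hb hc
  exact ⟨h, mul_eq_one_comm.mp h⟩
end

section
/- Let F ∈ Mat_{n×n}(ℂ) be symmetric (Fᵀ = F) and set g := √−1·(conj(F) − F); assume g is invertible. (Note g is automatically a real symmetric matrix, namely g = 2·Im(F) entrywise.) Let w ∈ ℂⁿ and let v', v'' ∈ ℝⁿ. Define w̃ := w − √−1·(v'' − F·v') ∈ ℂⁿ, and set a := w + conj(w), ã := w̃ + conj(w̃). Then ãᵀ·g⁻¹·ã − aᵀ·g⁻¹·a = −2·v'ᵀ·a + v'ᵀ·g·v'. -/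
open Matrix

/-- Let `F ∈ Mat_{n×n}(ℂ)` be symmetric, `g := √-1·(conj F − F)` invertible,
`w ∈ ℂⁿ`, `v', v'' ∈ ℝⁿ`, `w̃ := w − √-1·(v'' − F·v')`, `a := w + conj w`,
`ã := w̃ + conj w̃`.  Then `ãᵀ·g⁻¹·ã − aᵀ·g⁻¹·a = −2·v'ᵀ·a + v'ᵀ·g·v'`. -/
theorem stmt_13 (n : ℕ) (F : Matrix (Fin n) (Fin n) ℂ) (hF : Fᵀ = F)
    (g : Matrix (Fin n) (Fin n) ℂ)
    (hg : g = Complex.I • (F.map (starRingEnd ℂ) - F))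
    (hgu : IsUnit g)
    (w : Fin n → ℂ) (v' v'' : Fin n → ℝ)
    (tw : Fin n → ℂ)
    (htw : tw = fun i => w i - Complex.I * ((v'' i : ℂ) - F.mulVec (fun j => (v' j : ℂ)) i))
    (a ta : Fin n → ℂ)
    (ha : a = fun i => w i + (starRingEnd ℂ) (w i))
    (hta : ta = fun i => tw i + (starRingEnd ℂ) (tw i)) :
    ta ⬝ᵥ g⁻¹ *ᵥ ta - a ⬝ᵥ g⁻¹ *ᵥ a
      = -2 * ((fun i => (v' i : ℂ)) ⬝ᵥ a)
        + (fun i => (v' i : ℂ)) ⬝ᵥ g *ᵥ (fun j => (v' j : ℂ)) := by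
  set V : Fin n → ℂ := fun j => (v' j : ℂ) with hV
  have hdet : IsUnit g.det := (Matrix.isUnit_iff_isUnit_det g).mp hgu
  have hgsym : gᵀ = g := by
    rw [hg]
    ext i j
    have hFij : F i j = F j i := (congrFun (congrFun hF j) i : Fᵀ j i = F j i)
    simp [Matrix.transpose_apply, Matrix.smul_apply, Matrix.sub_apply, Matrix.map_apply, hFij]
  have hta3 : ta = a - g *ᵥ V := by
    funext i
    simp only [hta, htw, ha, hg, Matrix.mulVec, dotProduct, Matrix.smul_apply,
      Matrix.sub_apply, Matrix.map_apply, Pi.smul_apply, Pi.sub_apply, smul_eq_mul,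
      map_sub, map_add, map_sum, _root_.map_mul, Complex.conj_I, Complex.conj_ofReal, hV]
    simp only [Finset.mul_sum, Finset.sum_sub_distrib, mul_sub, sub_mul, neg_mul,
      Finset.sum_neg_distrib]
    ring
  have hinv1 : g⁻¹ *ᵥ (g *ᵥ V) = V := by
    rw [Matrix.mulVec_mulVec, Matrix.nonsing_inv_mul g hdet, Matrix.one_mulVec]
  have hinv2 : g *ᵥ (g⁻¹ *ᵥ a) = a := by
    rw [Matrix.mulVec_mulVec, Matrix.mul_nonsing_inv g hdet, Matrix.one_mulVec]
  have key1 : (g *ᵥ V) ⬝ᵥ (g⁻¹ *ᵥ a) = V ⬝ᵥ a := by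
    have h4 : (g⁻¹ *ᵥ a) ᵥ* g = a := by
      rw [← Matrix.mulVec_transpose, hgsym, hinv2]
    rw [dotProduct_comm, Matrix.dotProduct_mulVec, h4, dotProduct_comm]
  rw [hta3, Matrix.mulVec_sub, dotProduct_sub, sub_dotProduct,
    sub_dotProduct, hinv1, key1, dotProduct_comm a V,
    dotProduct_comm (g *ᵥ V) V]
  ring
end

section
/- Let (V, ω) be a complex symplectic vector space of complex dimension 2n with a compatible real structure τ. If L₁ is a Lagrangean subspace of (V, ω) with L₁ ∩ τL₁ = 0, then there exists a Lagrangean subspace L of (V, ω) with τL = L and L ∩ L₁ = 0. -/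
/-!
On `L₁` the form `h x y = ω x (τ y)` is skew-Hermitian, so by the spectral theorem (applied to
`i • h`) `L₁` has a basis `(wᵢ)` with `h wᵢ wⱼ = 0` for `i ≠ j`. The vectors `wᵢ + τ wᵢ` are fixed
by `τ` and pairwise `ω`-orthogonal, since the cross terms of `ω (wᵢ + τ wᵢ) (wⱼ + τ wⱼ)` are
`h wᵢ wⱼ` and `-h wⱼ wᵢ`. Their span is the required `L`: a combination
`∑ aᵢ • (wᵢ + τ wᵢ) = ∑ aᵢ • wᵢ + τ (∑ conj aᵢ • wᵢ)` lies in `L₁` only if `τ (∑ conj aᵢ • wᵢ) ∈ L₁`,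
which forces `a = 0` because `L₁ ∩ τ L₁ = 0`.
-/

open Matrix Submodule Set

theorem Matrix.exists_isUnit_det_conjTranspose_mul_mul_isDiag {n : Type*} [Fintype n]
    [DecidableEq n] {G : Matrix n n ℂ} (hG : Gᴴ = -G) :
    ∃ P : Matrix n n ℂ, IsUnit P.det ∧ (Pᴴ * G * P).IsDiag := by
  have hA : (Complex.I • G).IsHermitian := by
    rw [IsHermitian, conjTranspose_smul, hG, Complex.star_def, Complex.conj_I, neg_smul_neg]
  set U : Matrix n n ℂ := (hA.eigenvectorUnitary : Matrix n n ℂ)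
  refine ⟨U, UnitaryGroup.det_isUnit _, ?_⟩
  have hdiag := hA.conjStarAlgAut_star_eigenvectorUnitary
  rw [Unitary.conjStarAlgAut_star_apply, Matrix.mul_smul, Matrix.smul_mul] at hdiag
  have : Uᴴ * G * U = (-Complex.I) • diagonal (RCLike.ofReal ∘ hA.eigenvalues) := by
    rw [← hdiag, smul_smul, ← star_eq_conjTranspose]; simp [U]
  rw [this]
  exact (isDiag_diagonal _).smul _

theorem LinearMap.exists_basis_isOrthoᵢ_of_skewHermitian {W ι : Type*} [AddCommGroup W]
    [Module ℂ W] [Fintype ι] [DecidableEq ι] (B : W →ₗ[ℂ] W →ₗ⋆[ℂ] ℂ)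
    (hB : ∀ x y, starRingEnd ℂ (B x y) = -B y x) (b : Module.Basis ι ℂ W) :
    ∃ e : Module.Basis ι ℂ W, B.IsOrthoᵢ e := by
  set G := LinearMap.toMatrix₂ b b B
  have hG : Gᴴ = -G := by
    ext i j
    simp [G, hB]
  obtain ⟨P, hP, hdiag⟩ := Matrix.exists_isUnit_det_conjTranspose_mul_mul_isDiag hG
  set M := P.map (starRingEnd ℂ)
  have hM : IsUnit M.det := RingHom.map_det (starRingEnd ℂ) P ▸ hP.map _
  set e := b.map (M.toLinearEquiv b hM)
  have he : ∀ q, e q = b.equivFun.symm fun j => M j q := fun q => by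
    simp [e, Matrix.toLin_self, Module.Basis.equivFun_symm_apply]
  refine ⟨e, fun p q hpq => ?_⟩
  calc B (e p) (e q) = Pᴴ p ⬝ᵥ G *ᵥ fun k => P k q := by
        rw [he, he, ← dotProduct_toMatrix₂_mulVec]
        simp only [M, Function.comp_def, map_apply, RingHom.id_apply, Complex.conj_conj]
        rfl
    _ = (Pᴴ * G * P) p q := by
        rw [dotProduct_mulVec]
        rfl
    _ = 0 := hdiag hpq

section RealStructure

variable {V : Type*} [AddCommGroup V] [Module ℂ V] {ω : V →ₗ[ℂ] V →ₗ[ℂ] ℂ} {τ : V →ₗ⋆[ℂ] V}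

theorem LinearMap.IsAlt.conj_compl₂_apply (hAlt : ω.IsAlt) (hτ : ∀ v, τ (τ v) = v)
    (hτω : ∀ u v, ω (τ u) (τ v) = starRingEnd ℂ (ω u v)) (x y : V) :
    starRingEnd ℂ (ω.compl₂ τ x y) = -ω.compl₂ τ y x := by
  rw [LinearMap.compl₂_apply, LinearMap.compl₂_apply, ← hτω, hτ, hAlt.neg]

theorem mem_span_range_iff_apply_mem (hτ : ∀ v, τ (τ v) = v) {ι : Type*} {v : ι → V}
    (hv : ∀ i, τ (v i) = v i) (x : V) : x ∈ span ℂ (range v) ↔ τ x ∈ span ℂ (range v) := by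
  have hle : span ℂ (range v) ≤ (span ℂ (range v)).comap τ :=
    span_le.mpr <| by
      rintro _ ⟨i, rfl⟩
      simpa [hv] using subset_span (mem_range_self i)
  exact ⟨fun hx => hle hx, fun hx => hτ x ▸ hle hx⟩

theorem LinearMap.apply_eq_zero_of_mem_span_range {ι : Type*} [Fintype ι] {v : ι → V}
    (hv : ∀ i j, ω (v i) (v j) = 0) :
    ∀ x ∈ span ℂ (Set.range v), ∀ y ∈ span ℂ (Set.range v), ω x y = 0 := by
  intro x hx y hy
  obtain ⟨c, rfl⟩ := (mem_span_range_iff_exists_fun ℂ).mp hx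
  obtain ⟨d, rfl⟩ := (mem_span_range_iff_exists_fun ℂ).mp hy
  simp [hv]

variable {L₁ : Submodule ℂ V} {ι : Type*} {w : ι → V}

theorem eq_zero_of_sum_smul_add_conj_mem [Fintype ι] (hL₁τ : ∀ x ∈ L₁, τ x ∈ L₁ → x = 0)
    (hw : ∀ i, w i ∈ L₁) (hli : LinearIndependent ℂ w) {a : ι → ℂ}
    (ha : ∑ i, a i • (w i + τ (w i)) ∈ L₁) : a = 0 := by
  set x := ∑ i, starRingEnd ℂ (a i) • w i
  have hx : x ∈ L₁ := sum_mem fun i _ => smul_mem _ _ (hw i)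
  have hsum : ∑ i, a i • (w i + τ (w i)) = ∑ i, a i • w i + τ x := by
    simp [x, smul_add, Finset.sum_add_distrib, map_sum]
  have hx0 : x = 0 := by
    refine hL₁τ x hx ?_
    rw [hsum] at ha
    exact (add_mem_cancel_left (sum_mem fun i _ => smul_mem _ _ (hw i))).mp ha
  funext i
  simpa using Fintype.linearIndependent_iff.mp hli _ hx0 i

theorem linearIndependent_add_conj [Fintype ι] (hL₁τ : ∀ x ∈ L₁, τ x ∈ L₁ → x = 0)
    (hw : ∀ i, w i ∈ L₁) (hli : LinearIndependent ℂ w) :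
    LinearIndependent ℂ fun i => w i + τ (w i) :=
  Fintype.linearIndependent_iff.mpr fun a ha => by
    have ha₀ := eq_zero_of_sum_smul_add_conj_mem hL₁τ hw hli (ha ▸ L₁.zero_mem)
    exact fun i => congrFun ha₀ i

theorem span_range_add_conj_inf_eq_bot [Fintype ι] (hL₁τ : ∀ x ∈ L₁, τ x ∈ L₁ → x = 0)
    (hw : ∀ i, w i ∈ L₁) (hli : LinearIndependent ℂ w) :
    span ℂ (range fun i => w i + τ (w i)) ⊓ L₁ = ⊥ := by
  refine eq_bot_iff.mpr fun z hz => ?_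
  obtain ⟨a, rfl⟩ := (mem_span_range_iff_exists_fun ℂ).mp hz.1
  simp [eq_zero_of_sum_smul_add_conj_mem hL₁τ hw hli hz.2]

theorem apply_add_conj_eq_zero (hAlt : ω.IsAlt)
    (hτω : ∀ u v, ω (τ u) (τ v) = starRingEnd ℂ (ω u v))
    (hL₁ : ∀ x ∈ L₁, ∀ y ∈ L₁, ω x y = 0) (hw : ∀ i, w i ∈ L₁)
    (hortho : (ω.compl₂ τ).IsOrthoᵢ w) (i j : ι) :
    ω (w i + τ (w i)) (w j + τ (w j)) = 0 := by
  obtain rfl | hij := eq_or_ne i j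
  · exact hAlt _
  have hww := hL₁ _ (hw i) _ (hw j)
  have hij' : ω (w i) (τ (w j)) = 0 := hortho hij
  have hji' : ω (τ (w i)) (w j) = 0 := by
    rw [← hAlt.neg]
    exact neg_eq_zero.mpr (hortho hij.symm)
  simp [hτω, hww, hij', hji']

end RealStructure

theorem stmt_15_general (n : ℕ)
    (V : Type*) [AddCommGroup V] [Module ℂ V] [FiniteDimensional ℂ V]
    (ω : V →ₗ[ℂ] V →ₗ[ℂ] ℂ)
    (hAlt : ∀ v : V, ω v v = 0)
    (τ : V → V)
    (hτAdd : ∀ u v : V, τ (u + v) = τ u + τ v)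
    (hτSmul : ∀ (c : ℂ) (v : V), τ (c • v) = (starRingEnd ℂ) c • τ v)
    (hτInv : ∀ v : V, τ (τ v) = v)
    (hτω : ∀ u v : V, ω (τ u) (τ v) = (starRingEnd ℂ) (ω u v))
    (L₁ : Submodule ℂ V)
    (hL₁dim : Module.finrank ℂ L₁ = n)
    (hL₁Lag : ∀ x ∈ L₁, ∀ y ∈ L₁, ω x y = 0)
    (hL₁τ : ∀ x ∈ L₁, τ x ∈ L₁ → x = 0) :
    ∃ L : Submodule ℂ V,
      Module.finrank ℂ L = n ∧
      (∀ x ∈ L, ∀ y ∈ L, ω x y = 0) ∧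
      (∀ x : V, x ∈ L ↔ τ x ∈ L) ∧
      L ⊓ L₁ = ⊥ := by
  let τₗ : V →ₗ⋆[ℂ] V := ⟨⟨τ, hτAdd⟩, hτSmul⟩
  obtain ⟨e, he⟩ := ((ω.compl₂ τₗ).domRestrict₁₂ L₁ L₁).exists_basis_isOrthoᵢ_of_skewHermitian
    (fun x y => LinearMap.IsAlt.conj_compl₂_apply (τ := τₗ) hAlt hτInv hτω x y)
    (Module.finBasisOfFinrankEq ℂ L₁ hL₁dim)
  let w : Fin n → V := fun i => e i
  have hw : ∀ i, w i ∈ L₁ := fun i => (e i).2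
  have hli : LinearIndependent ℂ w := e.linearIndependent.map' L₁.subtype L₁.ker_subtype
  refine ⟨span ℂ (range fun i => w i + τₗ (w i)), ?_, ?_, ?_, ?_⟩
  · rw [finrank_span_eq_card (linearIndependent_add_conj hL₁τ hw hli), Fintype.card_fin]
  · exact LinearMap.apply_eq_zero_of_mem_span_range
      (apply_add_conj_eq_zero hAlt hτω hL₁Lag hw fun i j hij => he hij)
  · exact mem_span_range_iff_apply_mem (τ := τₗ) hτInv fun i => by
      simp [τₗ, hτAdd, hτInv, add_comm]
  · exact span_range_add_conj_inf_eq_bot hL₁τ hw hli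

/-- With `(V, ω, τ)` as usual, if `L₁` is a Lagrangean subspace of `(V, ω)`
with `L₁ ∩ τL₁ = 0`, then there exists a Lagrangean subspace `L` with `τL = L` and
`L ∩ L₁ = 0`. -/
theorem stmt_15 (n : ℕ) (hn : 1 ≤ n)
    (V : Type*) [AddCommGroup V] [Module ℂ V] [FiniteDimensional ℂ V]
    (hdim : Module.finrank ℂ V = 2 * n)
    (ω : V →ₗ[ℂ] V →ₗ[ℂ] ℂ)
    (hAlt : ∀ v : V, ω v v = 0)
    (hNondeg : ∀ u : V, (∀ v : V, ω u v = 0) → u = 0)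
    (τ : V → V)
    (hτAdd : ∀ u v : V, τ (u + v) = τ u + τ v)
    (hτSmul : ∀ (c : ℂ) (v : V), τ (c • v) = (starRingEnd ℂ) c • τ v)
    (hτInv : ∀ v : V, τ (τ v) = v)
    (hτω : ∀ u v : V, ω (τ u) (τ v) = (starRingEnd ℂ) (ω u v))
    (L₁ : Submodule ℂ V)
    (hL₁dim : Module.finrank ℂ L₁ = n)
    (hL₁Lag : ∀ x ∈ L₁, ∀ y ∈ L₁, ω x y = 0)
    (hL₁τ : ∀ x ∈ L₁, τ x ∈ L₁ → x = 0) :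
    ∃ L : Submodule ℂ V,
      Module.finrank ℂ L = n ∧
      (∀ x ∈ L, ∀ y ∈ L, ω x y = 0) ∧
      (∀ x : V, x ∈ L ↔ τ x ∈ L) ∧
      L ⊓ L₁ = ⊥ :=
  stmt_15_general n V ω hAlt τ hτAdd hτSmul hτInv hτω L₁ hL₁dim hL₁Lag hL₁τ
end
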